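/- Let F_q be a finite field and n a positive integer with q ≡ 3 (mod 4), 8 | n, and rad(n) dividing q − 1. Set m = n/gcd(n, q² − 1) and r = min(ν_2(n/2), ν_2(q + 1)). Then the total number of distinct monic irreducible factors of x^n − 1 in F_q[x] equals gcd(n, q − 1) · (1/2 + 2^{r−2}·(2 + ν_2(m))) · ∏_{p | m, p odd prime} (1 + ν_p(m)·(p − 1)/p). -/

import Mathlib

/-!
Since `gcd(q, n) = 1`, `X ^ n - 1` is the squarefree product of the cyclotomic polynomials
`Φ_d`, `d ∣ n`, and `Φ_d` splits over `𝔽_q` into `φ(d) / ord_d(q)` irreducible factors.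
When every prime factor `p` of `n` divides `q - 1`, the order of `q` modulo `p ^ c` is a power
of `p`, so orders modulo coprime divisors of `n` multiply and `d ↦ φ(d) / ord_d(q)` is
multiplicative on the divisors of `n`: the count is a product of local sums over the prime
powers dividing `n`. Lifting the exponent gives `ord_{p^c}(q) = p ^ (c - ν_p(q - 1))` for odd
`p`, and, as `q ≡ 3 (mod 4)`, `ord_{2^c}(q) = 2 ^ max(1, c - ν_2(q + 1))` for `c ≥ 2`. Each
local sum is thus a sum of totients up to a threshold followed by a constant tail, which gives
the local factors of the formula.
-/

open Polynomial Finset UniqueFactorizationMonoid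

namespace Nat

theorem prime_pow_succ_dvd_pow_prime_pow_sub_one {p q : ℕ} (hq : q ≠ 0) (hpq : p ∣ q - 1)
    (k : ℕ) : p ^ (k + 1) ∣ q ^ p ^ k - 1 := by
  have h1 : 1 ≤ q := Nat.pos_of_ne_zero hq
  have h : (p : ℤ) ∣ (q : ℤ) - 1 := by
    simpa [Nat.cast_sub h1] using Int.natCast_dvd_natCast.mpr hpq
  rw [← Int.natCast_dvd_natCast, Nat.cast_sub (Nat.one_le_pow _ _ h1)]
  simpa using dvd_sub_pow_of_dvd_sub h k

theorem dvd_pow_self_sub_one_of_forall_prime_dvd {q d : ℕ} (hq : q ≠ 0)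
    (hd : ∀ p ∈ d.primeFactors, p ∣ q - 1) : d ∣ q ^ d - 1 := by
  rcases eq_or_ne d 0 with rfl | hd0
  · simp
  refine (dvd_iff_prime_pow_dvd_dvd _ d).mpr fun p k hp hpk ↦ ?_
  rcases eq_or_ne k 0 with rfl | hk
  · simp
  have hpd : p ∣ d := (dvd_pow_self p hk).trans hpk
  calc p ^ k ∣ p ^ (k + 1) := pow_dvd_pow p k.le_succ
    _ ∣ q ^ p ^ k - 1 :=
      prime_pow_succ_dvd_pow_prime_pow_sub_one hq (hd p (mem_primeFactors.mpr ⟨hp, hpd, hd0⟩)) k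
    _ ∣ q ^ d - 1 := pow_sub_one_dvd_pow_sub_one q hpk

theorem coprime_of_forall_prime_dvd_sub_one {q n : ℕ} (hq : q ≠ 0) (hn : n ≠ 0)
    (hrad : ∀ p ∈ n.primeFactors, p ∣ q - 1) : q.Coprime n := by
  refine coprime_of_dvd' fun p hp hpq hpn ↦ ?_
  simpa [Nat.sub_sub_self (one_le_iff_ne_zero.mpr hq)] using
    Nat.dvd_sub hpq (hrad p (mem_primeFactors.mpr ⟨hp, hpn, hn⟩))

theorem factorization_pow_prime_pow_sub_one {p q : ℕ} (hp : p.Prime) (hp2 : p ≠ 2)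
    (hq : 1 < q) (hpq : p ∣ q - 1) (k : ℕ) :
    (q ^ p ^ k - 1).factorization p = (q - 1).factorization p + k := by
  have : Fact p.Prime := ⟨hp⟩
  have hpq' : ¬p ∣ q := fun h ↦ hp.one_lt.ne' (eq_one_of_dvd_one (by
    simpa [Nat.sub_sub_self hq.le] using Nat.dvd_sub h hpq))
  have := padicValNat.pow_sub_pow (hp.odd_of_ne_two hp2) hq (by simpa using hpq) hpq'
    (pow_ne_zero k hp.ne_zero)
  simp only [one_pow, padicValNat.prime_pow] at this
  simp only [factorization_def _ hp, this]

theorem factorization_sub_one_two_of_mod_four_eq_three {q : ℕ} (hq : q % 4 = 3) :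
    (q - 1).factorization 2 = 1 := by
  obtain ⟨s, hs⟩ : ∃ s, q - 1 = 2 * (2 * s + 1) := ⟨q / 4, by omega⟩
  rw [hs, factorization_mul two_ne_zero (by omega), Finsupp.add_apply,
    Prime.factorization_self prime_two, factorization_eq_zero_of_not_dvd (by omega)]

theorem factorization_pow_two_pow_sub_one {q : ℕ} (hq : q % 4 = 3) {k : ℕ} (hk : k ≠ 0) :
    (q ^ 2 ^ k - 1).factorization 2 = (q + 1).factorization 2 + k := by
  have := padicValNat.pow_two_sub_one (x := q) (n := 2 ^ k) (by omega) (by omega)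
    (pow_ne_zero k two_ne_zero) ((even_pow' hk).mpr even_two)
  rw [padicValNat.prime_pow] at this
  simp only [← factorization_def _ prime_two,
    factorization_sub_one_two_of_mod_four_eq_three hq] at this
  omega

theorem factorization_sq_sub_one_of_ne_two {p q : ℕ} (hp : p.Prime) (hp2 : p ≠ 2)
    (hq : 1 < q) (hpq : p ∣ q - 1) :
    (q ^ 2 - 1).factorization p = (q - 1).factorization p := by
  have hpq' : ¬p ∣ q + 1 := fun h ↦ hp2 <| (prime_dvd_prime_iff_eq hp prime_two).mp <| by
    simpa [show q + 1 - (q - 1) = 2 by omega] using Nat.dvd_sub h hpq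
  rw [← one_pow 2, sq_sub_sq, one_pow, factorization_mul (by omega) (by omega),
    Finsupp.add_apply, factorization_eq_zero_of_not_dvd hpq', zero_add]

theorem factorization_div_gcd {n N : ℕ} (hn : n ≠ 0) (hN : N ≠ 0) (p : ℕ) :
    (n / n.gcd N).factorization p =
      n.factorization p - min (n.factorization p) (N.factorization p) := by
  rw [factorization_div (gcd_dvd_left n N), Finsupp.tsub_apply, factorization_gcd hn hN,
    Finsupp.inf_apply]

theorem gcd_eq_prod_primeFactors_pow_min {n N : ℕ} (hn : n ≠ 0) (hN : N ≠ 0) :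
    n.gcd N = ∏ p ∈ n.primeFactors, p ^ min (n.factorization p) (N.factorization p) := by
  conv_lhs => rw [prod_primeFactors_pow_factorization (gcd_ne_zero_left hn)]
  refine (prod_subset (primeFactors_mono (gcd_dvd_left n N) hn) fun p _ hp ↦ ?_).trans
    (prod_congr rfl fun p _ ↦ by rw [factorization_gcd hn hN, Finsupp.inf_apply])
  rw [← support_factorization, Finsupp.notMem_support_iff] at hp
  rw [hp, pow_zero]

theorem sum_divisors_eq_prod_sum_prime_pow {R : Type*} [CommSemiring R] {f : ℕ → R}
    {n : ℕ} (hn : n ≠ 0) (h1 : f 1 = 1)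
    (hmul : ∀ a b, a * b ∣ n → a.Coprime b → f (a * b) = f a * f b) :
    ∑ d ∈ n.divisors, f d =
      ∏ p ∈ n.primeFactors, ∑ c ∈ range (n.factorization p + 1), f (p ^ c) := by
  classical
  let g : ArithmeticFunction R := ⟨fun d ↦ if d ∣ n then f d else 0, by simp [hn]⟩
  have hg : g.IsMultiplicative := by
    refine ArithmeticFunction.IsMultiplicative.iff_ne_zero.mpr ⟨by simp [g, h1], ?_⟩
    intro a b _ _ hab
    by_cases habn : a * b ∣ n
    · simp [g, habn, (dvd_mul_right a b).trans habn, (dvd_mul_left b a).trans habn,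
        hmul a b habn hab]
    · have : ¬a ∣ n ∨ ¬b ∣ n := by
        rw [← not_and_or]
        exact fun h ↦ habn (hab.mul_dvd_of_dvd_of_dvd h.1 h.2)
      rcases this with h | h <;> simp [g, habn, h]
  calc ∑ d ∈ n.divisors, f d = ∑ d ∈ n.divisors, g d :=
        sum_congr rfl fun d hd ↦ by simp [g, dvd_of_mem_divisors hd]
    _ = ∏ p ∈ n.primeFactors, ∑ c ∈ range (n.factorization p + 1), g (p ^ c) := by
        rw [← ArithmeticFunction.coe_zeta_mul_apply,
          (ArithmeticFunction.isMultiplicative_zeta.natCast.mul hg).multiplicative_factorization _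
            hn, prod_factorization_eq_prod_primeFactors]
        refine prod_congr rfl fun p hp ↦ ?_
        rw [ArithmeticFunction.coe_zeta_mul_apply,
          sum_divisors_prime_pow (prime_of_mem_primeFactors hp)]
    _ = _ := by
        refine prod_congr rfl fun p _ ↦ sum_congr rfl fun c hc ↦ ?_
        have : p ^ c ∣ n :=
          (pow_dvd_pow p (by simpa [Nat.lt_succ_iff] using hc)).trans (ordProj_dvd n p)
        simp [g, this]

end Nat

namespace ZMod

theorem natCast_pow_eq_one_iff_dvd {q d t : ℕ} (hq : q ≠ 0) :
    (q : ZMod d) ^ t = 1 ↔ d ∣ q ^ t - 1 := by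
  rw [← natCast_eq_zero_iff, Nat.cast_sub (Nat.one_le_pow _ _ (Nat.pos_of_ne_zero hq)),
    sub_eq_zero, Nat.cast_pow, Nat.cast_one]

theorem orderOf_natCast_dvd_iff {q d t : ℕ} (hq : q ≠ 0) :
    orderOf (q : ZMod d) ∣ t ↔ d ∣ q ^ t - 1 := by
  rw [orderOf_dvd_iff_pow_eq_one, natCast_pow_eq_one_iff_dvd hq]

theorem orderOf_natCast_dvd_self_of_forall_prime_dvd {q d : ℕ} (hq : q ≠ 0)
    (hd : ∀ p ∈ d.primeFactors, p ∣ q - 1) : orderOf (q : ZMod d) ∣ d :=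
  (orderOf_natCast_dvd_iff hq).mpr (Nat.dvd_pow_self_sub_one_of_forall_prime_dvd hq hd)

theorem orderOf_natCast_mul {q a b : ℕ} (hq : q ≠ 0) (hab : a.Coprime b)
    (hord : (orderOf (q : ZMod a)).Coprime (orderOf (q : ZMod b))) :
    orderOf (q : ZMod (a * b)) = orderOf (q : ZMod a) * orderOf (q : ZMod b) := by
  have hself (d : ℕ) : d ∣ q ^ orderOf (q : ZMod d) - 1 :=
    (orderOf_natCast_dvd_iff hq).mp dvd_rfl
  refine Nat.dvd_antisymm ((orderOf_natCast_dvd_iff hq).mpr ?_)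
    (hord.mul_dvd_of_dvd_of_dvd ?_ ?_)
  · exact hab.mul_dvd_of_dvd_of_dvd
      ((orderOf_natCast_dvd_iff hq).mp (dvd_mul_right _ _))
      ((orderOf_natCast_dvd_iff hq).mp (dvd_mul_left _ _))
  · exact (orderOf_natCast_dvd_iff hq).mpr ((dvd_mul_right a b).trans (hself _))
  · exact (orderOf_natCast_dvd_iff hq).mpr ((dvd_mul_left b a).trans (hself _))

theorem orderOf_natCast_prime_pow_of_factorization {p q k c : ℕ} (hp : p.Prime) (hq : 1 < q)
    (hlt : (q ^ p ^ k - 1).factorization p < c)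
    (hle : c ≤ (q ^ p ^ (k + 1) - 1).factorization p) :
    orderOf (q : ZMod (p ^ c)) = p ^ (k + 1) := by
  have : Fact p.Prime := ⟨hp⟩
  have hne (t : ℕ) : q ^ p ^ t - 1 ≠ 0 :=
    Nat.sub_ne_zero_of_lt (Nat.one_lt_pow (pow_ne_zero _ hp.ne_zero) hq)
  refine orderOf_eq_prime_pow ?_ ?_ <;>
    rw [natCast_pow_eq_one_iff_dvd (by omega), hp.pow_dvd_iff_le_factorization (hne _)]
  · omega
  · exact hle

theorem orderOf_natCast_prime_pow_of_ne_two {p q : ℕ} (hp : p.Prime) (hp2 : p ≠ 2)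
    (hq : 1 < q) (hpq : p ∣ q - 1) (c : ℕ) :
    orderOf (q : ZMod (p ^ c)) = p ^ (c - (q - 1).factorization p) := by
  set v := (q - 1).factorization p
  have hv : 1 ≤ v := (hp.dvd_iff_one_le_factorization (by omega)).mp hpq
  rcases le_or_gt c v with hcv | hcv
  · rw [Nat.sub_eq_zero_of_le hcv, pow_zero, orderOf_eq_one_iff, ← pow_one (q : ZMod (p ^ c)),
      natCast_pow_eq_one_iff_dvd (by omega), pow_one]
    exact (hp.pow_dvd_iff_le_factorization (by omega)).mpr hcv
  · obtain ⟨k, hk⟩ : ∃ k, c - v = k + 1 := ⟨c - v - 1, by omega⟩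
    rw [hk]
    refine orderOf_natCast_prime_pow_of_factorization hp hq ?_ ?_ <;>
      rw [Nat.factorization_pow_prime_pow_sub_one hp hp2 hq hpq] <;> omega

theorem orderOf_natCast_two_pow_of_mod_four_eq_three {q c : ℕ} (hq : q % 4 = 3) (hc : 2 ≤ c) :
    orderOf (q : ZMod (2 ^ c)) = 2 ^ max 1 (c - (q + 1).factorization 2) := by
  have hβ : 2 ≤ (q + 1).factorization 2 :=
    (Nat.prime_two.pow_dvd_iff_le_factorization (by omega)).mp (by norm_num; omega)
  obtain ⟨k, hk⟩ : ∃ k, max 1 (c - (q + 1).factorization 2) = k + 1 :=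
    ⟨_, (Nat.succ_pred_eq_of_pos (by omega)).symm⟩
  rw [hk]
  refine orderOf_natCast_prime_pow_of_factorization Nat.prime_two (by omega) ?_ ?_
  · rcases eq_or_ne k 0 with rfl | hk0
    · rw [pow_zero, pow_one, Nat.factorization_sub_one_two_of_mod_four_eq_three hq]
      omega
    · rw [Nat.factorization_pow_two_pow_sub_one hq hk0]
      omega
  · rw [Nat.factorization_pow_two_pow_sub_one hq k.succ_ne_zero]
    omega

end ZMod

theorem Finset.sum_range_succ_eq_add_nsmul_of_eq_const {M : Type*} [AddCommMonoid M]
    {t : ℕ → M} {w : ℕ} {K : M} (h : ∀ c, w < c → t c = K) (A : ℕ) :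
    ∑ c ∈ range (A + 1), t c = ∑ c ∈ range (min A w + 1), t c + (A - min A w) • K := by
  rw [← sum_range_add_sum_Ico _ (show min A w + 1 ≤ A + 1 by omega)]
  congr 1
  rw [sum_congr rfl fun c hc ↦ h c (by rw [mem_Ico] at hc; omega), sum_const, Nat.card_Ico]
  congr 1
  omega

noncomputable def cyclotomicFactorCount (q d : ℕ) : ℚ :=
  (d.totient : ℚ) / orderOf (q : ZMod d)

@[simp]
theorem cyclotomicFactorCount_one (q : ℕ) : cyclotomicFactorCount q 1 = 1 := by
  simp [cyclotomicFactorCount, Subsingleton.elim _ (1 : ZMod 1)]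

theorem cyclotomicFactorCount_mul {q a b : ℕ} (hq : q ≠ 0) (hab : a.Coprime b)
    (ha : ∀ p ∈ a.primeFactors, p ∣ q - 1) (hb : ∀ p ∈ b.primeFactors, p ∣ q - 1) :
    cyclotomicFactorCount q (a * b) = cyclotomicFactorCount q a * cyclotomicFactorCount q b := by
  have hord := Nat.Coprime.coprime_dvd_left
    (ZMod.orderOf_natCast_dvd_self_of_forall_prime_dvd hq ha)
    (Nat.Coprime.coprime_dvd_right (ZMod.orderOf_natCast_dvd_self_of_forall_prime_dvd hq hb) hab)
  rw [cyclotomicFactorCount, ZMod.orderOf_natCast_mul hq hab hord, Nat.totient_mul hab]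
  push_cast
  exact mul_div_mul_comm _ _ _ _

theorem sum_divisors_cyclotomicFactorCount {q n : ℕ} (hq : q ≠ 0) (hn : n ≠ 0)
    (hrad : ∀ p ∈ n.primeFactors, p ∣ q - 1) :
    ∑ d ∈ n.divisors, cyclotomicFactorCount q d =
      ∏ p ∈ n.primeFactors,
        ∑ c ∈ range (n.factorization p + 1), cyclotomicFactorCount q (p ^ c) := by
  refine Nat.sum_divisors_eq_prod_sum_prime_pow hn (cyclotomicFactorCount_one q)
    fun a b habn hab ↦ cyclotomicFactorCount_mul hq hab ?_ ?_ <;>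
  exact fun p hp ↦ hrad p (Nat.primeFactors_mono (Dvd.dvd.trans (by simp) habn) hn hp)

theorem sum_range_cyclotomicFactorCount_prime_pow_of_ne_two {p q : ℕ} (hp : p.Prime)
    (hp2 : p ≠ 2) (hq : 1 < q) (hpq : p ∣ q - 1) (A : ℕ) :
    ∑ c ∈ range (A + 1), cyclotomicFactorCount q (p ^ c) =
      (p : ℚ) ^ min A ((q - 1).factorization p) *
        (1 + ((A - min A ((q - 1).factorization p) : ℕ) : ℚ) * (p - 1) / p) := by
  set v := (q - 1).factorization p
  have hv : 1 ≤ v := (hp.dvd_iff_one_le_factorization (by omega)).mp hpq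
  have hp0 : (p : ℚ) ≠ 0 := by exact_mod_cast hp.ne_zero
  have hlow : ∀ c ≤ v, cyclotomicFactorCount q (p ^ c) = (p ^ c).totient := fun c hc ↦ by
    rw [cyclotomicFactorCount, ZMod.orderOf_natCast_prime_pow_of_ne_two hp hp2 hq hpq,
      Nat.sub_eq_zero_of_le hc, pow_zero, Nat.cast_one, div_one]
  have hhigh : ∀ c, v < c →
      cyclotomicFactorCount q (p ^ c) = (p : ℚ) ^ (v - 1) * (p - 1) := by
    intro c hc
    rw [cyclotomicFactorCount, ZMod.orderOf_natCast_prime_pow_of_ne_two hp hp2 hq hpq,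
      Nat.totient_prime_pow hp (by omega)]
    push_cast [Nat.cast_sub hp.one_le]
    rw [div_eq_iff (pow_ne_zero _ hp0), mul_right_comm, ← pow_add,
      show v - 1 + (c - v) = c - 1 by omega]
  have hsum :
      ∑ c ∈ range (min A v + 1), cyclotomicFactorCount q (p ^ c) = (p : ℚ) ^ min A v := by
    rw [sum_congr rfl fun c hc ↦ hlow c (by rw [mem_range] at hc; omega), ← Nat.cast_sum,
      ← Nat.sum_divisors_prime_pow hp, Nat.sum_totient, Nat.cast_pow]
  rw [sum_range_succ_eq_add_nsmul_of_eq_const hhigh, hsum, nsmul_eq_mul]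
  rcases le_or_gt A v with hAv | hAv
  · simp [min_eq_left hAv]
  · have hpv : (p : ℚ) ^ v = p ^ (v - 1) * p := by rw [← pow_succ, Nat.sub_add_cancel hv]
    rw [min_eq_right hAv.le, hpv]
    field_simp

theorem sum_range_cyclotomicFactorCount_two_pow {q a : ℕ} (hq : q % 4 = 3) (ha : 2 ≤ a) :
    ∑ c ∈ range (a + 1), cyclotomicFactorCount q (2 ^ c) =
      1 + (2 : ℚ) ^ (min a ((q + 1).factorization 2 + 1) - 2) *
        (2 + ((a - min a ((q + 1).factorization 2 + 1) : ℕ) : ℚ)) := by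
  set β := (q + 1).factorization 2
  have hβ : 2 ≤ β :=
    (Nat.prime_two.pow_dvd_iff_le_factorization (by omega)).mp (by norm_num; omega)
  have hlow : ∀ c, 2 ≤ c → c ≤ β + 1 →
      cyclotomicFactorCount q (2 ^ c) = (2 : ℚ) ^ (c - 2) := by
    intro c hc2 hcβ
    rw [cyclotomicFactorCount, ZMod.orderOf_natCast_two_pow_of_mod_four_eq_three hq hc2,
      show max 1 (c - β) = 1 by omega, Nat.totient_prime_pow Nat.prime_two (by omega)]
    push_cast
    rw [div_eq_iff two_ne_zero, mul_one, ← pow_succ, show c - 2 + 1 = c - 1 by omega]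
  have hhigh : ∀ c, β + 1 < c → cyclotomicFactorCount q (2 ^ c) = (2 : ℚ) ^ (β - 1) := by
    intro c hc
    rw [cyclotomicFactorCount, ZMod.orderOf_natCast_two_pow_of_mod_four_eq_three hq (by omega),
      show max 1 (c - β) = c - β by omega, Nat.totient_prime_pow Nat.prime_two (by omega)]
    push_cast
    rw [div_eq_iff (pow_ne_zero _ two_ne_zero), mul_one, ← pow_add,
      show β - 1 + (c - β) = c - 1 by omega]
  have hone : cyclotomicFactorCount q 2 = 1 := by
    have hodd : Odd q := Nat.odd_iff.mpr (by omega)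
    simp [cyclotomicFactorCount, ZMod.natCast_eq_one_iff_odd.mpr hodd]
  obtain ⟨u, hu⟩ : ∃ u, min a (β + 1) = u + 1 := ⟨min a (β + 1) - 1, by omega⟩
  have hsmall :
      ∑ c ∈ range (min a (β + 1) + 1), cyclotomicFactorCount q (2 ^ c) = 1 + 2 ^ u := by
    have hterm : ∀ i ∈ range u, cyclotomicFactorCount q (2 ^ (i + 1 + 1)) = (2 : ℚ) ^ i :=
      fun i hi ↦ by rw [hlow _ (by omega) (by rw [mem_range] at hi; omega)]; simp
    rw [hu, sum_range_succ', sum_range_succ', sum_congr rfl hterm, geom_sum_eq (by norm_num)]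
    simp [hone]
    ring
  have h2u : (2 : ℚ) ^ u = 2 ^ (u + 1 - 2) * 2 := by rw [← pow_succ]; congr 1; omega
  rw [sum_range_succ_eq_add_nsmul_of_eq_const hhigh, hsmall, nsmul_eq_mul, hu, h2u]
  rcases le_or_gt a (β + 1) with haβ | haβ
  · rw [show a - (u + 1) = 0 by omega]
    push_cast
    ring
  · rw [show β - 1 = u + 1 - 2 by omega]
    ring

theorem UniqueFactorizationMonoid.card_normalizedFactors_prod {α ι : Type*}
    [CommMonoidWithZero α] [NormalizationMonoid α] [UniqueFactorizationMonoid α]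
    (s : Finset ι) {f : ι → α} (hf : ∀ i ∈ s, f i ≠ 0) :
    Multiset.card (normalizedFactors (∏ i ∈ s, f i)) =
      ∑ i ∈ s, Multiset.card (normalizedFactors (f i)) := by
  induction s using Finset.cons_induction with
  | empty => simp
  | cons a s has ih =>
    have := nontrivial_of_ne _ _ (hf a (mem_cons_self a s))
    rw [prod_cons, sum_cons, normalizedFactors_mul (hf a (mem_cons_self a s))
      (prod_ne_zero_iff.mpr fun i hi ↦ hf i (mem_cons_of_mem hi)), Multiset.card_add,
      ih fun i hi ↦ hf i (mem_cons_of_mem hi)]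

theorem FiniteField.natCast_ne_zero_of_coprime_card {K : Type*} [Field K] [Fintype K] {d : ℕ}
    (hd : (Fintype.card K).Coprime d) : (d : K) ≠ 0 := by
  obtain ⟨f, hp, hcard⟩ := FiniteField.card K (ringChar K)
  intro h
  have hpd : ringChar K ∣ d := (CharP.cast_eq_zero_iff K (ringChar K) d).mp h
  have hpq : ringChar K ∣ Fintype.card K := hcard ▸ dvd_pow_self _ f.ne_zero
  exact hp.one_lt.ne' (Nat.eq_one_of_dvd_one (hd ▸ Nat.dvd_gcd hpq hpd))

namespace Polynomial

variable {K : Type*} [Field K]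

theorem ncard_monic_irreducible_dvd_of_squarefree [DecidableEq K] {P : K[X]}
    (hP : Squarefree P) :
    {f : K[X] | f.Monic ∧ Irreducible f ∧ f ∣ P}.ncard =
      Multiset.card (normalizedFactors P) := by
  have hP0 := hP.ne_zero
  have : {f : K[X] | f.Monic ∧ Irreducible f ∧ f ∣ P} =
      ↑(normalizedFactors P).toFinset := by
    ext f
    rw [Finset.mem_coe, Multiset.mem_toFinset, Polynomial.mem_normalizedFactors_iff hP0,
      Set.mem_ofPred_eq]
    tauto
  rw [this, Set.ncard_coe_finset, Multiset.toFinset_card_of_nodup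
    ((squarefree_iff_nodup_normalizedFactors hP0).mp hP)]

variable [Fintype K]

theorem card_normalizedFactors_cyclotomic [DecidableEq K] {d : ℕ}
    (hd : (Fintype.card K).Coprime d) :
    (Multiset.card (normalizedFactors (cyclotomic d K)) : ℚ) =
      cyclotomicFactorCount (Fintype.card K) d := by
  obtain ⟨f, hp, hcard⟩ := FiniteField.card K (ringChar K)
  have : Fact (ringChar K).Prime := ⟨hp⟩
  have hdK := FiniteField.natCast_ne_zero_of_coprime_card hd
  have : NeZero (d : K) := ⟨hdK⟩
  have : NeZero d := ⟨by rintro rfl; exact hdK Nat.cast_zero⟩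
  have hpd : (ringChar K).Coprime d :=
    Nat.Coprime.coprime_dvd_left (hcard ▸ dvd_pow_self _ f.ne_zero) hd
  rw [← Multiset.toFinset_card_of_nodup ((squarefree_iff_nodup_normalizedFactors
    (cyclotomic_ne_zero d K)).mp (squarefree_cyclotomic d K)),
    normalizedFactors_cyclotomic_card hcard hpd]
  set u := ZMod.unitOfCoprime _ (hpd.pow_left f)
  have hu : orderOf u = orderOf (Fintype.card K : ZMod d) := by
    rw [← orderOf_units, ZMod.coe_unitOfCoprime, hcard]
  have hdvd : orderOf u ∣ d.totient := ZMod.card_units_eq_totient d ▸ orderOf_dvd_card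
  rw [Nat.cast_div hdvd (Nat.cast_ne_zero.mpr (orderOf_pos u).ne'), hu, cyclotomicFactorCount]

theorem ncard_monic_irreducible_dvd_X_pow_sub_one {n : ℕ} (hn : n ≠ 0)
    (hco : (Fintype.card K).Coprime n) :
    ({f : K[X] | f.Monic ∧ Irreducible f ∧ f ∣ X ^ n - 1}.ncard : ℚ) =
      ∑ d ∈ n.divisors, cyclotomicFactorCount (Fintype.card K) d := by
  classical
  have hsq : Squarefree (X ^ n - 1 : K[X]) := by
    simpa using (separable_X_pow_sub_C (1 : K) (FiniteField.natCast_ne_zero_of_coprime_card hco)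
      one_ne_zero).squarefree
  rw [ncard_monic_irreducible_dvd_of_squarefree hsq,
    ← prod_cyclotomic_eq_X_pow_sub_one (Nat.pos_of_ne_zero hn),
    card_normalizedFactors_prod _ fun d _ ↦ cyclotomic_ne_zero d K, Nat.cast_sum]
  exact sum_congr rfl fun d hd ↦ card_normalizedFactors_cyclotomic
    (Nat.Coprime.coprime_dvd_right (Nat.dvd_of_mem_divisors hd) hco)

end Polynomial

theorem factorization_div_gcd_sq_sub_one_of_ne_two {p q n : ℕ} (hp : p.Prime) (hp2 : p ≠ 2)
    (hq : 1 < q) (hpq : p ∣ q - 1) (hn : n ≠ 0) :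
    (n / n.gcd (q ^ 2 - 1)).factorization p =
      n.factorization p - min (n.factorization p) ((q - 1).factorization p) := by
  rw [Nat.factorization_div_gcd hn (Nat.sub_ne_zero_of_lt (Nat.one_lt_pow two_ne_zero hq)),
    Nat.factorization_sq_sub_one_of_ne_two hp hp2 hq hpq]

theorem factorization_two_div_gcd_sq_sub_one {q n : ℕ} (hq : q % 4 = 3) (hn : n ≠ 0) :
    (n / n.gcd (q ^ 2 - 1)).factorization 2 =
      n.factorization 2 - min (n.factorization 2) ((q + 1).factorization 2 + 1) := by
  rw [Nat.factorization_div_gcd hn (Nat.sub_ne_zero_of_lt (Nat.one_lt_pow two_ne_zero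
    (by omega))), show q ^ 2 = q ^ 2 ^ 1 by norm_num,
    Nat.factorization_pow_two_pow_sub_one hq one_ne_zero]

theorem prod_sum_cyclotomicFactorCount_erase_two {q n : ℕ} (hq : 1 < q) (hn : n ≠ 0)
    (hrad : ∀ p ∈ n.primeFactors, p ∣ q - 1) :
    ∏ p ∈ n.primeFactors.erase 2,
        ∑ c ∈ range (n.factorization p + 1), cyclotomicFactorCount q (p ^ c) =
      (∏ p ∈ n.primeFactors.erase 2,
          (p : ℚ) ^ min (n.factorization p) ((q - 1).factorization p)) *
        ∏ p ∈ (n / n.gcd (q ^ 2 - 1)).primeFactors.filter Odd,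
          (1 + ((n / n.gcd (q ^ 2 - 1)).factorization p : ℚ) * (p - 1) / p) := by
  set m := n / n.gcd (q ^ 2 - 1)
  have hodd {p} (hp : p ∈ n.primeFactors.erase 2) : p.Prime ∧ p ≠ 2 :=
    ⟨Nat.prime_of_mem_primeFactors (mem_of_mem_erase hp), ne_of_mem_erase hp⟩
  have hsupp : ∏ p ∈ m.primeFactors.filter Odd, (1 + (m.factorization p : ℚ) * (p - 1) / p) =
      ∏ p ∈ n.primeFactors.erase 2, (1 + (m.factorization p : ℚ) * (p - 1) / p) := by
    refine prod_subset (fun p hp ↦ ?_) fun p hp hpm ↦ ?_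
    · rw [mem_filter] at hp
      exact mem_erase.mpr ⟨fun h ↦ Nat.not_odd_iff_even.mpr (h ▸ even_two) hp.2,
        Nat.primeFactors_mono (Nat.div_dvd_of_dvd (Nat.gcd_dvd_left _ _)) hn hp.1⟩
    · have : p ∉ m.primeFactors := fun h ↦
        hpm (mem_filter.mpr ⟨h, (hodd hp).1.odd_of_ne_two (hodd hp).2⟩)
      rw [← Nat.support_factorization, Finsupp.notMem_support_iff] at this
      simp [this]
  rw [hsupp, ← prod_mul_distrib]
  refine prod_congr rfl fun p hp ↦ ?_
  have hpq := hrad p (mem_of_mem_erase hp)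
  rw [sum_range_cyclotomicFactorCount_prime_pow_of_ne_two (hodd hp).1 (hodd hp).2 hq hpq,
    factorization_div_gcd_sq_sub_one_of_ne_two (hodd hp).1 (hodd hp).2 hq hpq hn]

theorem gcd_sub_one_eq_two_mul_prod {q n : ℕ} (hq : q % 4 = 3) (hn : n ≠ 0) (h2 : 2 ∣ n) :
    (n.gcd (q - 1) : ℚ) = 2 * ∏ p ∈ n.primeFactors.erase 2,
      (p : ℚ) ^ min (n.factorization p) ((q - 1).factorization p) := by
  rw [Nat.gcd_eq_prod_primeFactors_pow_min hn (by omega), Nat.cast_prod,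
    ← mul_prod_erase _ _ (Nat.mem_primeFactors.mpr ⟨Nat.prime_two, h2, hn⟩),
    Nat.factorization_sub_one_two_of_mod_four_eq_three hq,
    min_eq_right ((Nat.prime_two.dvd_iff_one_le_factorization hn).mp h2)]
  push_cast
  ring

/-- If `q ≡ 3 (mod 4)`, `8 ∣ n` and `rad(n) ∣ q - 1`, then with
`m = n / gcd(n, q² - 1)` and `r = min(ν₂(n/2), ν₂(q+1))`, the total number of distinct
monic irreducible factors of `x^n - 1` over `F_q` is
`gcd(n, q-1) · (1/2 + 2^{r-2}·(2 + ν₂(m))) · ∏_{p | m, p odd prime} (1 + ν_p(m)·(p-1)/p)`. -/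
theorem total_count_irreducible_factors_trinomial_case {F : Type*} [Field F] [Fintype F]
    (q : ℕ) (hq : q = Fintype.card F) (n : ℕ) (hn : 0 < n)
    (h1 : q % 4 = 3) (h2 : 8 ∣ n)
    (h3 : (∏ p ∈ n.primeFactors, p) ∣ (q - 1))
    (m r : ℕ) (hm : m = n / Nat.gcd n (q ^ 2 - 1))
    (hr : r = min ((n / 2).factorization 2) ((q + 1).factorization 2)) :
    (({f : Polynomial F | f.Monic ∧ Irreducible f ∧
          f ∣ (X ^ n - 1 : Polynomial F)}.ncard : ℚ)
      = (Nat.gcd n (q - 1) : ℚ) *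
          (1 / 2 + (2 : ℚ) ^ ((r : ℤ) - 2) * (2 + (m.factorization 2 : ℚ))) *
          ∏ p ∈ m.primeFactors.filter (fun p => Odd p),
            (1 + (m.factorization p : ℚ) * ((p : ℚ) - 1) / (p : ℚ))) := by
  subst hm
  have hn0 : n ≠ 0 := hn.ne'
  have h2n : 2 ∣ n := (by norm_num : 2 ∣ 8).trans h2
  have hrad : ∀ p ∈ n.primeFactors, p ∣ q - 1 := fun p hp ↦ (dvd_prod_of_mem _ hp).trans h3
  have ha : 3 ≤ n.factorization 2 := (Nat.prime_two.pow_dvd_iff_le_factorization hn0).mp h2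
  have hβ : 1 ≤ (q + 1).factorization 2 :=
    (Nat.prime_two.dvd_iff_one_le_factorization (by omega)).mp (by omega)
  have hw : min (n.factorization 2) ((q + 1).factorization 2 + 1) = r + 1 := by
    rw [hr, Nat.factorization_div h2n, Finsupp.tsub_apply,
      Nat.Prime.factorization_self Nat.prime_two]
    omega
  have hr2 : (2 : ℚ) ^ (r + 1 - 2) = 2 * 2 ^ ((r : ℤ) - 2) := by
    obtain ⟨s, rfl⟩ : ∃ s, r = s + 1 := ⟨r - 1, by omega⟩
    rw [show s + 1 + 1 - 2 = s by omega, show ((s + 1 : ℕ) : ℤ) - 2 = s - 1 by push_cast; ring,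
      zpow_sub_one₀ two_ne_zero, zpow_natCast]
    ring
  rw [Polynomial.ncard_monic_irreducible_dvd_X_pow_sub_one hn0
      (hq ▸ Nat.coprime_of_forall_prime_dvd_sub_one (by omega) hn0 hrad), ← hq,
    sum_divisors_cyclotomicFactorCount (by omega) hn0 hrad,
    ← mul_prod_erase _ _ (Nat.mem_primeFactors.mpr ⟨Nat.prime_two, h2n, hn0⟩),
    sum_range_cyclotomicFactorCount_two_pow h1 (by omega),
    prod_sum_cyclotomicFactorCount_erase_two (by omega) hn0 hrad,
    factorization_two_div_gcd_sq_sub_one h1 hn0, gcd_sub_one_eq_two_mul_prod h1 hn0 h2n, hw, hr2]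
  ring
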